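/- For any prime p > 3, n \ge 1, and S coprime to p, \sum_{x,y=0}^{p^n-1} e^{2\pi i S(x^2+xy+y^2)/p^n} = p^n (-3/p)^n, where (-3/p) is the Legendre symbol; for p = 3, the sum equals 3^{(2n+1)/2} (S/3) i; and for p = 2 with n \ge 2, the sum equals (-1)^n 2^n. -/

import Mathlib

open Finset

noncomputable def Gsum (S : ℤ) (k : ℕ) : ℂ :=
  ∑ x ∈ Finset.range k,
    Complex.exp (2 * Real.pi * Complex.I * ((S * (x : ℤ) ^ 2 : ℤ) : ℂ) / (k : ℂ))

noncomputable def Gsum2 (a b c S : ℤ) (k : ℕ) : ℂ :=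
  ∑ x ∈ Finset.range k, ∑ y ∈ Finset.range k,
    Complex.exp (2 * Real.pi * Complex.I *
      ((S * (a * (x : ℤ) ^ 2 + b * (x : ℤ) * (y : ℤ) + c * (y : ℤ) ^ 2) : ℤ) : ℂ) / (k : ℂ))

/-!
Write `G(a, N) = Gsum a N` and `G₂(S, N) = Gsum2 1 1 1 S N`. Completing the square,
`4 (x² + xy + y²) = (2x + y)² + 3y²`, splits `G₂(S, N)` for odd `N` into the product
`G(c, N) G(3c, N)`, where `4c ≡ S (mod N)`.

Modulo `p^(n+2)`, write each variable as `u + p^(n+1) v`: the sum over `v` is a character sum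
modulo `p`, which vanishes unless `p` divides the gradient of the form at `u`. For `x²` with `p`
odd, and for `x² + xy + y²` with `p ≠ 3`, this forces `p ∣ u`, whence
`G(a, p^(n+2)) = p G(a, p^n)` and `G₂(S, p^(n+2)) = p² G₂(S, p^n)`. This reduces everything to
the modulus `p`, where `G(a, p) = (a/p) g` with `g² = (-1/p) p`, and to the values
`G₂(S, 2) = -2` and `G(c, 3) = (c/3) i √3`; for `p = 3` one also needs `G(3c, 3N) = 3 G(c, N)`.
-/

noncomputable def expFrac (N : ℕ) (m : ℤ) : ℂ :=
  Complex.exp (2 * Real.pi * Complex.I * (m : ℂ) / (N : ℂ))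

lemma Gsum_eq_sum_expFrac (a : ℤ) (N : ℕ) :
    Gsum a N = ∑ x ∈ range N, expFrac N (a * (x : ℤ) ^ 2) := rfl

lemma Gsum2_eq_sum_expFrac (S : ℤ) (N : ℕ) :
    Gsum2 1 1 1 S N =
      ∑ x ∈ range N, ∑ y ∈ range N, expFrac N (S * ((x : ℤ) ^ 2 + x * y + (y : ℤ) ^ 2)) := by
  simp only [Gsum2, one_mul]
  rfl

section expFrac

variable {N : ℕ}

lemma expFrac_eq_stdAddChar [NeZero N] (m : ℤ) :
    expFrac N m = ZMod.stdAddChar (m : ZMod N) :=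
  (ZMod.stdAddChar_coe m).symm

lemma expFrac_add [NeZero N] (m m' : ℤ) : expFrac N (m + m') = expFrac N m * expFrac N m' := by
  simp only [expFrac_eq_stdAddChar, Int.cast_add, AddChar.map_add_eq_mul]

lemma expFrac_congr [NeZero N] {m m' : ℤ} (h : (N : ℤ) ∣ m' - m) :
    expFrac N m = expFrac N m' := by
  rw [expFrac_eq_stdAddChar, expFrac_eq_stdAddChar,
    (ZMod.intCast_eq_intCast_iff_dvd_sub m m' N).mpr h]

lemma expFrac_eq_one_of_dvd [NeZero N] {m : ℤ} (h : (N : ℤ) ∣ m) : expFrac N m = 1 := by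
  rw [expFrac_eq_stdAddChar, (ZMod.intCast_zmod_eq_zero_iff_dvd m N).mpr h,
    AddChar.map_zero_eq_one]

lemma expFrac_zero (N : ℕ) : expFrac N 0 = 1 := by
  simp [expFrac]

lemma expFrac_mul_mul_left {M : ℕ} (hM : M ≠ 0) (m : ℤ) :
    expFrac (M * N) (M * m) = expFrac N m := by
  have hM' : (M : ℂ) ≠ 0 := Nat.cast_ne_zero.mpr hM
  rw [expFrac, expFrac, Nat.cast_mul, Int.cast_mul, Int.cast_natCast,
    mul_left_comm _ (M : ℂ), mul_div_mul_left _ _ hM']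

lemma expFrac_add_mul_add_sq {M q : ℕ} [NeZero M] [NeZero q] (hqM : q ∣ M) (b m k : ℤ) :
    expFrac (M * q) (b + M * m + M ^ 2 * k) = expFrac (M * q) b * expFrac q m := by
  have hsq : ((M * q : ℕ) : ℤ) ∣ M ^ 2 * k :=
    Dvd.dvd.mul_right (by rw [sq]; exact_mod_cast Nat.mul_dvd_mul_left M hqM) k
  rw [expFrac_add, expFrac_add, expFrac_eq_one_of_dvd hsq, mul_one,
    expFrac_mul_mul_left (NeZero.ne M)]

lemma expFrac_pow_add_two_sq_mul {p : ℕ} (hp : p ≠ 0) (n : ℕ) (m : ℤ) :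
    expFrac (p ^ (n + 2)) ((p : ℤ) ^ 2 * m) = expFrac (p ^ n) m := by
  rw [pow_add, mul_comm]
  exact_mod_cast expFrac_mul_mul_left (pow_ne_zero 2 hp) m

lemma expFrac_two_of_not_dvd {m : ℤ} (hm : ¬ 2 ∣ m) : expFrac 2 m = -1 := by
  rw [expFrac_congr (N := 2) (m' := 1) (by omega), expFrac]
  push_cast
  rw [mul_one, mul_div_right_comm, mul_div_cancel_left₀ _ two_ne_zero, Complex.exp_pi_mul_I]

lemma expFrac_three_one : expFrac 3 1 = -1 / 2 + Real.sqrt 3 / 2 * Complex.I := by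
  have h : 2 * Real.pi * Complex.I * ((1 : ℤ) : ℂ) / ((3 : ℕ) : ℂ) =
      ((Real.pi - Real.pi / 3 : ℝ) : ℂ) * Complex.I := by
    push_cast
    ring
  rw [expFrac, h, Complex.exp_mul_I, ← Complex.ofReal_cos, ← Complex.ofReal_sin, Real.cos_pi_sub,
    Real.sin_pi_sub, Real.cos_pi_div_three, Real.sin_pi_div_three]
  push_cast
  ring

end expFrac

lemma sum_range_zmod {M : Type*} [AddCommMonoid M] (N : ℕ) [NeZero N] (f : ZMod N → M) :
    ∑ x ∈ range N, f x = ∑ x : ZMod N, f x :=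
  sum_nbij' (↑) ZMod.val (by simp) (by simp [ZMod.val_lt])
    (fun x hx => ZMod.val_cast_of_lt (mem_range.mp hx)) (fun x _ => ZMod.natCast_zmod_val x)
    (fun _ _ => rfl)

lemma sum_range_expFrac_mul (N : ℕ) [NeZero N] (m : ℤ) :
    ∑ v ∈ range N, expFrac N (m * v) = if (N : ℤ) ∣ m then (N : ℂ) else 0 := by
  have h := AddChar.sum_mulShift (m : ZMod N) (ZMod.isPrimitive_stdAddChar N)
  simp only [expFrac_eq_stdAddChar, Int.cast_mul, Int.cast_natCast, ZMod.card] at h ⊢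
  rw [sum_range_zmod N (fun v => ZMod.stdAddChar ((m : ZMod N) * v))]
  simp_rw [mul_comm (m : ZMod N)]
  rw [h]
  split_ifs <;> simp_all [ZMod.intCast_zmod_eq_zero_iff_dvd]

lemma sum_range_mul {M : Type*} [AddCommMonoid M] (f : ℕ → M) (a b : ℕ) :
    ∑ x ∈ range (a * b), f x = ∑ u ∈ range a, ∑ v ∈ range b, f (u + a * v) := by
  induction b with
  | zero => simp
  | succ b ih =>
    rw [Nat.mul_succ, sum_range_add, ih]
    simp only [sum_range_succ, sum_add_distrib, add_comm]

lemma sum_range_mul_ite_dvd {M : Type*} [AddCommMonoid M] (f : ℕ → M) {q : ℕ} (hq : q ≠ 0)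
    (N : ℕ) : ∑ u ∈ range (q * N), (if q ∣ u then f u else 0) = ∑ w ∈ range N, f (q * w) := by
  rw [← sum_filter]
  have : (range (q * N)).filter (q ∣ ·) = (range N).map ⟨(q * ·), mul_right_injective₀ hq⟩ := by
    ext x
    simp only [mem_filter, mem_range, mem_map, Function.Embedding.coeFn_mk]
    constructor
    · rintro ⟨hx, w, rfl⟩
      exact ⟨w, lt_of_mul_lt_mul_left hx q.zero_le, rfl⟩
    · rintro ⟨w, hw, rfl⟩
      exact ⟨Nat.mul_lt_mul_of_pos_left hw (Nat.pos_of_ne_zero hq), dvd_mul_right q w⟩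
  rw [this, sum_map]
  rfl

lemma eq_pow_mul_of_add_two {M : Type*} [Monoid M] {f : ℕ → M} {r : M}
    (h1 : f 1 = r * f 0) (h : ∀ n, f (n + 2) = r ^ 2 * f n) (n : ℕ) : f n = r ^ n * f 0 := by
  induction n using Nat.twoStepInduction with
  | zero => rw [pow_zero, one_mul]
  | one => rw [pow_one, h1]
  | more n ih _ => rw [h, ih, ← mul_assoc, ← pow_add, add_comm]

lemma Gsum_eq_sum_zmod (a : ℤ) (N : ℕ) [NeZero N] :
    Gsum a N = ∑ x : ZMod N, ZMod.stdAddChar ((a : ZMod N) * x ^ 2) := by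
  rw [Gsum_eq_sum_expFrac, ← sum_range_zmod]
  simp [expFrac_eq_stdAddChar]

lemma Gsum2_eq_sum_zmod (S : ℤ) (N : ℕ) [NeZero N] :
    Gsum2 1 1 1 S N =
      ∑ x : ZMod N, ∑ y : ZMod N, ZMod.stdAddChar ((S : ZMod N) * (x ^ 2 + x * y + y ^ 2)) := by
  rw [Gsum2_eq_sum_expFrac, ← sum_range_zmod]
  refine sum_congr rfl fun x _ => ?_
  rw [← sum_range_zmod]
  simp [expFrac_eq_stdAddChar]

lemma sum_addChar_mul_sq {F R : Type*} [Field F] [Fintype F] [DecidableEq F] [CommRing R]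
    [IsDomain R] (hF : ringChar F ≠ 2) {ψ : AddChar F R} (hψ : ψ.IsPrimitive) {a : F}
    (ha : a ≠ 0) :
    ∑ x, ψ (a * x ^ 2) =
      quadraticChar F a * gaussSum ((quadraticChar F).ringHomComp (Int.castRingHom R)) ψ := by
  set χ := (quadraticChar F).ringHomComp (Int.castRingHom R)
  have hcount (t : F) : (#{x | x ^ 2 = t} : R) = χ t + 1 := by
    have h := quadraticChar_card_sqrts hF t
    rw [Set.toFinset_ofPred] at h
    simp only [χ, MulChar.ringHomComp_apply, eq_intCast]
    exact_mod_cast congrArg (Int.cast : ℤ → R) h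
  have hmulShift : ∑ t, ψ (a * t) = 0 :=
    AddChar.sum_eq_zero_of_ne_one (hψ ha)
  calc ∑ x, ψ (a * x ^ 2)
      = ∑ t, (#{x | x ^ 2 = t} : R) * ψ (a * t) := by
        rw [← sum_fiberwise' univ (· ^ 2) fun t => ψ (a * t)]
        simp
    _ = gaussSum χ (ψ.mulShift a) := by
        simp_rw [hcount, add_mul, one_mul, sum_add_distrib, hmulShift, add_zero]
        rfl
    _ = quadraticChar F a * gaussSum χ ψ := by
        have h := gaussSum_mulShift_eq χ ψ (Units.mk0 a ha)
        rw [Units.val_mk0, ((quadraticChar_isQuadratic F).comp _).inv] at h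
        rw [h]
        rfl

lemma Gsum_mul_Gsum_prime {p : ℕ} [Fact p.Prime] (hp2 : p ≠ 2) {a b : ℤ}
    (ha : ¬ (p : ℤ) ∣ a) (hb : ¬ (p : ℤ) ∣ b) :
    Gsum a p * Gsum b p = legendreSym p (-(a * b)) * p := by
  have hF : ringChar (ZMod p) ≠ 2 := by rwa [ZMod.ringChar_zmod_n]
  set χ := (quadraticChar (ZMod p)).ringHomComp (Int.castRingHom ℂ)
  have hψ := ZMod.isPrimitive_stdAddChar p
  have hχ : χ ≠ 1 := (MulChar.ringHomComp_ne_one_iff Int.cast_injective).mpr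
    (quadraticChar_ne_one hF)
  have hsq := gaussSum_sq hχ ((quadraticChar_isQuadratic _).comp _) hψ
  rw [← ZMod.intCast_zmod_eq_zero_iff_dvd] at ha hb
  rw [Gsum_eq_sum_zmod, Gsum_eq_sum_zmod, sum_addChar_mul_sq hF hψ ha,
    sum_addChar_mul_sq hF hψ hb, mul_mul_mul_comm, ← sq, hsq, ZMod.card]
  simp only [legendreSym, χ, MulChar.ringHomComp_apply, eq_intCast]
  rw [Int.cast_neg, Int.cast_mul, neg_eq_neg_one_mul ((a : ZMod p) * b), map_mul, map_mul]
  push_cast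
  ring

lemma exists_four_mul_sub_dvd {N : ℕ} (hN : Odd N) (S : ℤ) : ∃ c : ℤ, (N : ℤ) ∣ 4 * c - S := by
  obtain ⟨k, rfl⟩ := hN
  exact ⟨S * (k + 1) ^ 2, S * (2 * k + 3), by push_cast; ring⟩

lemma not_dvd_of_dvd_four_mul_sub {p S c : ℤ} (hS : ¬ p ∣ S) (hc : p ∣ 4 * c - S) : ¬ p ∣ c :=
  fun h => hS (by simpa using dvd_sub (h.mul_left 4) hc)

lemma Gsum2_eq_Gsum_mul_Gsum {N : ℕ} [NeZero N] (hN : Odd N) {S c : ℤ}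
    (hc : (N : ℤ) ∣ 4 * c - S) : Gsum2 1 1 1 S N = Gsum c N * Gsum (3 * c) N := by
  have hS : (S : ZMod N) = 4 * c := by
    rw [(ZMod.intCast_eq_intCast_iff_dvd_sub S (4 * c) N).mpr hc]
    push_cast
    rfl
  have h2 : IsUnit (2 : ZMod N) := by
    simpa using (ZMod.isUnit_iff_coprime 2 N).mpr (Nat.coprime_two_left.mpr hN)
  rw [mul_comm, Gsum2_eq_sum_zmod, Gsum_eq_sum_zmod, Gsum_eq_sum_zmod, sum_mul_sum]
  refine sum_congr rfl fun x _ => ?_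
  refine Fintype.sum_bijective (fun y => 2 * y + x)
    ((Equiv.addRight x).bijective.comp h2.unit.mulLeft_bijective) _ _ fun y => ?_
  rw [← AddChar.map_add_eq_mul, hS]
  push_cast
  ring_nf

lemma Gsum_mul_mul {q : ℕ} (hq : q ≠ 0) (a : ℤ) (N : ℕ) [NeZero N] :
    Gsum (q * a) (q * N) = q * Gsum a N := by
  have hperiodic (u v : ℕ) :
      expFrac N (a * ((u + N * v : ℕ) : ℤ) ^ 2) = expFrac N (a * (u : ℤ) ^ 2) :=
    expFrac_congr ⟨-(a * (2 * u * v + N * v ^ 2)), by push_cast; ring⟩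
  simp_rw [Gsum_eq_sum_expFrac, mul_assoc, expFrac_mul_mul_left hq, mul_comm q N, sum_range_mul,
    hperiodic, sum_const, card_range, nsmul_eq_mul, mul_sum]

lemma Gsum_prime_pow_add_two {p : ℕ} (hp : p.Prime) (hp2 : p ≠ 2) {a : ℤ}
    (ha : ¬ (p : ℤ) ∣ a) (n : ℕ) : Gsum a (p ^ (n + 2)) = p * Gsum a (p ^ n) := by
  have : NeZero p := ⟨hp.ne_zero⟩
  have hpZ : Prime (p : ℤ) := Nat.prime_iff_prime_int.mp hp
  have hp2Z : ¬ (p : ℤ) ∣ 2 := fun h =>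
    hp2 ((Nat.prime_dvd_prime_iff_eq hp Nat.prime_two).mp (by exact_mod_cast h))
  have hdvd (u : ℕ) : (p : ℤ) ∣ 2 * a * u ↔ p ∣ u := by
    rw [hpZ.dvd_mul, hpZ.dvd_mul, Int.natCast_dvd_natCast]
    tauto
  have hlift (u v : ℕ) : expFrac (p ^ (n + 1) * p) (a * ((u + p ^ (n + 1) * v : ℕ) : ℤ) ^ 2) =
      expFrac (p ^ (n + 1) * p) (a * (u : ℤ) ^ 2) * expFrac p (2 * a * u * v) := by
    rw [← expFrac_add_mul_add_sq (dvd_pow_self p n.add_one_ne_zero) _ _ (a * (v : ℤ) ^ 2)]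
    congr 1
    push_cast
    ring
  calc Gsum a (p ^ (n + 2))
      = ∑ u ∈ range (p ^ (n + 1)), ∑ v ∈ range p,
          expFrac (p ^ (n + 1) * p) (a * ((u + p ^ (n + 1) * v : ℕ) : ℤ) ^ 2) := by
        rw [Gsum_eq_sum_expFrac, pow_succ, sum_range_mul]
    _ = ∑ u ∈ range (p * p ^ n),
          if p ∣ u then p * expFrac (p ^ (n + 2)) (a * (u : ℤ) ^ 2) else 0 := by
        rw [← pow_succ']
        refine sum_congr rfl fun u _ => ?_
        simp_rw [hlift, ← mul_sum, sum_range_expFrac_mul, hdvd, ← pow_succ]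
        split_ifs <;> simp [mul_comm]
    _ = p * Gsum a (p ^ n) := by
        rw [sum_range_mul_ite_dvd _ hp.ne_zero, Gsum_eq_sum_expFrac, mul_sum]
        refine sum_congr rfl fun w _ => ?_
        rw [← expFrac_pow_add_two_sq_mul hp.ne_zero n]
        congr 2
        push_cast
        ring

lemma prime_dvd_gradient_iff {p : ℤ} (hp : Prime p) (hp3 : ¬ p ∣ 3) {S : ℤ} (hS : ¬ p ∣ S)
    (x y : ℤ) : (p ∣ S * (2 * x + y) ∧ p ∣ S * (x + 2 * y)) ↔ p ∣ x ∧ p ∣ y := by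
  simp only [hp.dvd_mul, hS, false_or]
  refine ⟨fun ⟨h₁, h₂⟩ => ⟨?_, ?_⟩, fun ⟨hx, hy⟩ => ⟨?_, ?_⟩⟩
  · refine (hp.dvd_mul.mp ?_).resolve_left hp3
    convert dvd_sub (h₁.mul_left 2) h₂ using 1
    ring
  · refine (hp.dvd_mul.mp ?_).resolve_left hp3
    convert dvd_sub (h₂.mul_left 2) h₁ using 1
    ring
  · exact dvd_add (hx.mul_left 2) hy
  · exact dvd_add hx (hy.mul_left 2)

lemma sum_sum_expFrac_lift {p : ℕ} (hp : p.Prime) (hp3 : p ≠ 3) {S : ℤ} (hS : ¬ (p : ℤ) ∣ S)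
    {M : ℕ} [NeZero M] (hpM : p ∣ M) (u₁ u₂ : ℕ) :
    ∑ v₁ ∈ range p, ∑ v₂ ∈ range p, expFrac (M * p) (S * (((u₁ + M * v₁ : ℕ) : ℤ) ^ 2 +
        (u₁ + M * v₁ : ℕ) * (u₂ + M * v₂ : ℕ) + ((u₂ + M * v₂ : ℕ) : ℤ) ^ 2)) =
      if p ∣ u₁ then
        (if p ∣ u₂ then p ^ 2 * expFrac (M * p) (S * ((u₁ : ℤ) ^ 2 + u₁ * u₂ + (u₂ : ℤ) ^ 2))
        else 0)
      else 0 := by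
  have : NeZero p := ⟨hp.ne_zero⟩
  have hp3Z : ¬ (p : ℤ) ∣ 3 := fun h =>
    hp3 ((Nat.prime_dvd_prime_iff_eq hp Nat.prime_three).mp (by exact_mod_cast h))
  have hgrad := prime_dvd_gradient_iff (Nat.prime_iff_prime_int.mp hp) hp3Z hS u₁ u₂
  simp only [Int.natCast_dvd_natCast] at hgrad
  have hlift (v₁ v₂ : ℕ) : expFrac (M * p) (S * (((u₁ + M * v₁ : ℕ) : ℤ) ^ 2 +
      (u₁ + M * v₁ : ℕ) * (u₂ + M * v₂ : ℕ) + ((u₂ + M * v₂ : ℕ) : ℤ) ^ 2)) =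
      expFrac (M * p) (S * ((u₁ : ℤ) ^ 2 + u₁ * u₂ + (u₂ : ℤ) ^ 2)) *
        (expFrac p (S * (2 * u₁ + u₂) * v₁) * expFrac p (S * (u₁ + 2 * u₂) * v₂)) := by
    rw [← expFrac_add, ← expFrac_add_mul_add_sq hpM _ _
      (S * ((v₁ : ℤ) ^ 2 + v₁ * v₂ + (v₂ : ℤ) ^ 2))]
    congr 1
    push_cast
    ring
  simp_rw [hlift, ← mul_sum, ← sum_mul, sum_range_expFrac_mul]
  simp only [ite_zero_mul_ite_zero]
  simp only [hgrad, ite_and]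
  split_ifs <;> ring

lemma Gsum2_prime_pow_add_two {p : ℕ} (hp : p.Prime) (hp3 : p ≠ 3) {S : ℤ}
    (hS : ¬ (p : ℤ) ∣ S) (n : ℕ) :
    Gsum2 1 1 1 S (p ^ (n + 2)) = p ^ 2 * Gsum2 1 1 1 S (p ^ n) := by
  have : NeZero p := ⟨hp.ne_zero⟩
  obtain ⟨T, hT⟩ : ∃ T : ℕ → ℕ → ℂ, ∀ x y : ℕ,
      T x y = expFrac (p ^ (n + 1) * p) (S * ((x : ℤ) ^ 2 + x * y + (y : ℤ) ^ 2)) :=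
    ⟨_, fun _ _ => rfl⟩
  have hinner (u₁ u₂ : ℕ) : ∑ v₁ ∈ range p, ∑ v₂ ∈ range p,
      T (u₁ + p ^ (n + 1) * v₁) (u₂ + p ^ (n + 1) * v₂) =
      if p ∣ u₁ then (if p ∣ u₂ then p ^ 2 * T u₁ u₂ else 0) else 0 := by
    simp only [hT]
    exact sum_sum_expFrac_lift hp hp3 hS (dvd_pow_self p n.add_one_ne_zero) u₁ u₂
  calc Gsum2 1 1 1 S (p ^ (n + 2))
      = ∑ u₁ ∈ range (p ^ (n + 1)), ∑ u₂ ∈ range (p ^ (n + 1)), ∑ v₁ ∈ range p,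
          ∑ v₂ ∈ range p, T (u₁ + p ^ (n + 1) * v₁) (u₂ + p ^ (n + 1) * v₂) := by
        rw [Gsum2_eq_sum_expFrac, pow_succ _ (n + 1)]
        simp_rw [← hT, sum_range_mul]
        exact sum_congr rfl fun u₁ _ => sum_comm
    _ = ∑ u₁ ∈ range (p * p ^ n), if p ∣ u₁ then
          ∑ u₂ ∈ range (p * p ^ n), (if p ∣ u₂ then p ^ 2 * T u₁ u₂ else 0) else 0 := by
        simp_rw [hinner, ← pow_succ']
        refine sum_congr rfl fun u₁ _ => ?_
        split_ifs <;> simp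
    _ = p ^ 2 * Gsum2 1 1 1 S (p ^ n) := by
        simp_rw [sum_range_mul_ite_dvd _ hp.ne_zero, hT, ← pow_succ]
        rw [Gsum2_eq_sum_expFrac, mul_sum]
        refine sum_congr rfl fun w₁ _ => ?_
        rw [mul_sum]
        refine sum_congr rfl fun w₂ _ => ?_
        rw [← expFrac_pow_add_two_sq_mul hp.ne_zero n]
        congr 2
        push_cast
        ring

lemma Gsum_one (a : ℤ) : Gsum a 1 = 1 := by
  simp [Gsum]

lemma Gsum2_one (S : ℤ) : Gsum2 1 1 1 S 1 = 1 := by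
  simp [Gsum2]

lemma Gsum2_two {S : ℤ} (hS : ¬ 2 ∣ S) : Gsum2 1 1 1 S 2 = -2 := by
  have h3S : ¬ 2 ∣ S * 3 := by omega
  simp [Gsum2_eq_sum_expFrac, sum_range_succ, expFrac_two_of_not_dvd hS,
    expFrac_two_of_not_dvd h3S, expFrac_zero]
  norm_num

lemma Gsum_three {c : ℤ} (hc : ¬ 3 ∣ c) :
    Gsum c 3 = Real.sqrt 3 * legendreSym 3 c * Complex.I := by
  have hsum : Gsum c 3 = 1 + 2 * expFrac 3 c := by
    simp only [Gsum_eq_sum_expFrac, sum_range_succ, sum_range_zero]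
    rw [expFrac_congr (m := c * (2 : ℕ) ^ 2) (m' := c) ⟨-c, by push_cast; ring⟩]
    simp [expFrac_zero]
    ring
  -- Euler's criterion modulo 3: `(c/3) ≡ c`.
  have hcong : (3 : ℤ) ∣ legendreSym 3 c - c :=
    (ZMod.intCast_eq_intCast_iff_dvd_sub c _ 3).mp (by simpa using (legendreSym.eq_pow 3 c).symm)
  have hc' : (c : ZMod 3) ≠ 0 := by rwa [ne_eq, ZMod.intCast_zmod_eq_zero_iff_dvd]
  have hsqrt : (Real.sqrt 3 : ℂ) ^ 2 = 3 := by
    exact_mod_cast Real.sq_sqrt (by norm_num : (0 : ℝ) ≤ 3)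
  rw [hsum, expFrac_congr hcong]
  rcases legendreSym.eq_one_or_neg_one 3 hc' with h | h <;> rw [h]
  · rw [expFrac_three_one]
    push_cast
    ring
  · rw [expFrac_congr (m' := 1 + 1) (by norm_num), expFrac_add, expFrac_three_one]
    push_cast
    linear_combination Complex.I ^ 2 / 2 * hsqrt + 3 / 2 * Complex.I_sq

lemma Gsum2_prime_pow_of_three_lt {p : ℕ} [hp : Fact p.Prime] (hp3 : 3 < p) {S : ℤ}
    (hS : ¬ (p : ℤ) ∣ S) (n : ℕ) :
    Gsum2 1 1 1 S (p ^ n) = (legendreSym p (-3) * p) ^ n := by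
  have hodd : Odd p := hp.out.odd_of_ne_two (by omega)
  have hp3Z : ¬ (p : ℤ) ∣ 3 := fun h => by
    have := Int.le_of_dvd (by norm_num) h
    omega
  obtain ⟨c, hc⟩ := exists_four_mul_sub_dvd hodd S
  have hpc := not_dvd_of_dvd_four_mul_sub hS hc
  have hp3c : ¬ (p : ℤ) ∣ 3 * c := fun h =>
    ((Nat.prime_iff_prime_int.mp hp.out).dvd_mul.mp h).elim hp3Z hpc
  have hbase : Gsum2 1 1 1 S p = legendreSym p (-3) * p := by
    rw [Gsum2_eq_Gsum_mul_Gsum hodd hc, Gsum_mul_Gsum_prime (by omega) hpc hp3c,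
      show -(c * (3 * c)) = -3 * c ^ 2 by ring, legendreSym.mul, legendreSym.sq_one' p
        (by rwa [ne_eq, ZMod.intCast_zmod_eq_zero_iff_dvd]), mul_one]
  have hsq : ((legendreSym p (-3) : ℤ) : ℂ) ^ 2 = 1 := by
    exact_mod_cast legendreSym.sq_one p
      (by rw [ne_eq, ZMod.intCast_zmod_eq_zero_iff_dvd]; exact fun h => hp3Z (dvd_neg.mp h))
  simpa [Gsum2_one] using eq_pow_mul_of_add_two (f := fun n => Gsum2 1 1 1 S (p ^ n))
    (by simpa [Gsum2_one] using hbase)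
    (fun n => by rw [Gsum2_prime_pow_add_two hp.out (by omega) hS, mul_pow, hsq, one_mul]) n

lemma Gsum2_two_pow {S : ℤ} (hS : ¬ 2 ∣ S) (n : ℕ) : Gsum2 1 1 1 S (2 ^ n) = (-2) ^ n := by
  simpa [Gsum2_one] using eq_pow_mul_of_add_two (f := fun n => Gsum2 1 1 1 S (2 ^ n))
    (by simpa [Gsum2_one] using Gsum2_two hS)
    (fun n => by
      rw [Gsum2_prime_pow_add_two Nat.prime_two (by norm_num) (by exact_mod_cast hS)]
      norm_num) n

lemma Gsum2_three_pow {S : ℤ} (hS : ¬ 3 ∣ S) {n : ℕ} (hn : 0 < n) :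
    Gsum2 1 1 1 S (3 ^ n) = 3 ^ n * Real.sqrt 3 * legendreSym 3 S * Complex.I := by
  obtain ⟨m, rfl⟩ : ∃ m, n = m + 1 := ⟨n - 1, by omega⟩
  have hodd : Odd (3 ^ (m + 1)) := Odd.pow (by decide)
  obtain ⟨c, hc⟩ := exists_four_mul_sub_dvd hodd S
  have hc3 : (3 : ℤ) ∣ 4 * c - S :=
    (dvd_pow_self (3 : ℤ) m.succ_ne_zero).trans (by exact_mod_cast hc)
  have h3c := not_dvd_of_dvd_four_mul_sub hS hc3
  have hleg : legendreSym 3 c = legendreSym 3 S := by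
    unfold legendreSym
    rw [(ZMod.intCast_eq_intCast_iff_dvd_sub S c 3).mpr (by omega)]
  have hchain := eq_pow_mul_of_add_two (f := fun m => Gsum c (3 ^ (m + 1)) * Gsum c (3 ^ m))
    (r := 3) (by simp only [Gsum_prime_pow_add_two Nat.prime_three (by norm_num) h3c 0]; ring)
    (fun k => by simp only [Gsum_prime_pow_add_two Nat.prime_three (by norm_num) h3c]; ring) m
  rw [Gsum2_eq_Gsum_mul_Gsum hodd hc, pow_succ', show (3 : ℤ) * c = ((3 : ℕ) : ℤ) * c by norm_num,
    Gsum_mul_mul three_ne_zero, ← pow_succ', mul_left_comm, hchain]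
  simp only [zero_add, pow_one, pow_zero, Gsum_one, mul_one, Gsum_three h3c, hleg]
  push_cast
  ring

theorem stmt_19 (p : ℕ) (hp : p.Prime) (n : ℕ) (hn : 0 < n) (S : ℤ)
    (hS : IsCoprime S (p : ℤ)) :
    (3 < p →
      Gsum2 1 1 1 S (p ^ n) = (p : ℂ) ^ n * ((@legendreSym p ⟨hp⟩ (-3) : ℤ) : ℂ) ^ n) ∧
    (p = 3 →
      Gsum2 1 1 1 S (3 ^ n) =
        (3 : ℂ) ^ n * (Real.sqrt 3 : ℂ) * ((@legendreSym 3 ⟨by norm_num⟩ S : ℤ) : ℂ) *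
          Complex.I) ∧
    (p = 2 → 2 ≤ n →
      Gsum2 1 1 1 S (2 ^ n) = (-1 : ℂ) ^ n * (2 : ℂ) ^ n) := by
  have : Fact p.Prime := ⟨hp⟩
  have hpS : ¬ (p : ℤ) ∣ S := fun h =>
    (Nat.prime_iff_prime_int.mp hp).not_isUnit (hS.isUnit_of_dvd' h dvd_rfl)
  refine ⟨fun hp3 => ?_, fun hp3 => ?_, fun hp2 _ => ?_⟩
  · rw [Gsum2_prime_pow_of_three_lt hp3 hpS, mul_pow, mul_comm]
  · subst hp3
    exact Gsum2_three_pow (by exact_mod_cast hpS) hn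
  · subst hp2
    rw [Gsum2_two_pow (by exact_mod_cast hpS), ← mul_pow]
    norm_num
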